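/- arXiv:2510.10498 — 2 statements merged into one kernel-verified Lean document; each statement's English description precedes it below -/
import Mathlib

section
/- Let b ≥ 1 be an integer and set ω = ⌈(n+2)/(b+1)⌉ for an integer n ≥ b + 2. Then 2e(K_{n−ω} ∨ ωK_1) = (n − ω)(n + ω − 1) < ((b² + 2b)n² − 4n − 4)/(b+1)². -/
open scoped Classical ENNReal

noncomputable def signlessLaplacian {V : Type*} [Fintype V] [DecidableEq V]
    (G : SimpleGraph V) : Matrix V V ℝ :=
  Matrix.of fun u v =>
    (if u = v then ((G.neighborSet u).ncard : ℝ) else 0) + (if G.Adj u v then 1 else 0)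

/-- The `Q`-index: the largest eigenvalue of the signless Laplacian `D(G) + A(G)`. -/
noncomputable def qIndex {V : Type*} [Fintype V] [DecidableEq V]
    (G : SimpleGraph V) : ℝ :=
  sSup (spectrum ℝ (signlessLaplacian G))

/-- `K_s ∨ (K_{ns 0} ∪ K_{ns 1} ∪ ⋯)` : the join of a clique of size `s` with a
disjoint union of cliques of sizes `ns i`. -/
def joinCliques (s : ℕ) {t : ℕ} (ns : Fin t → ℕ) :
    SimpleGraph (Fin s ⊕ (Σ i : Fin t, Fin (ns i))) where
  Adj u v := u ≠ v ∧ ((∃ a, u = Sum.inl a) ∨ (∃ a, v = Sum.inl a) ∨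
      ∃ (i : Fin t) (x y : Fin (ns i)), u = Sum.inr ⟨i, x⟩ ∧ v = Sum.inr ⟨i, y⟩)
  symm := ⟨by
    rintro u v ⟨hne, h⟩
    refine ⟨hne.symm, ?_⟩
    rcases h with ⟨a, ha⟩ | ⟨a, ha⟩ | ⟨i, x, y, hx, hy⟩
    · exact Or.inr (Or.inl ⟨a, ha⟩)
    · exact Or.inl ⟨a, ha⟩
    · exact Or.inr (Or.inr ⟨i, y, x, hy, hx⟩)⟩
  loopless := ⟨fun u h => h.1 rfl⟩

/-- `c(G - S)`: number of connected components after deleting the vertex set `S`. -/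
noncomputable def numComp {V : Type*} (G : SimpleGraph V) (S : Set V) : ℕ :=
  Nat.card (G.induce Sᶜ).ConnectedComponent

/-- The `l`-toughness `t_l(G) = min { |S| / c(G-S) : S ⊂ V(G), c(G-S) ≥ l }`,
with value `+∞` (the empty infimum in `ℝ≥0∞`) if no such `S` exists. -/
noncomputable def lToughness {V : Type*} [Fintype V] (G : SimpleGraph V) (l : ℕ) : ℝ≥0∞ :=
  ⨅ (S : Finset V) (_ : l ≤ numComp G (S : Set V)),
    (S.card : ℝ≥0∞) / (numComp G (S : Set V) : ℝ≥0∞)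

/-!
Summing degrees, `K_s ∨ tK₁` has `2e = s(s + t - 1) + ts`, which for `s = n - ω`, `t = ω` is
`(n - ω)(n + ω - 1) = n² - (ω² - ω + n)`. Since `(b² + 2b)n² - 4n - 4 = (b + 1)²n² - (n + 2)²`,
the bound is `n² - x²` with `x = (n + 2)/(b + 1)`, so it suffices that `x² < ω² - ω + n`. This
follows from `x ≤ ω ≤ n` and `x < n`: if `ω < n` then already `x² ≤ ω² < ω² + (n - ω)`, and if
`ω = n` then `x < ω`.
-/

open Finset

namespace joinCliques

variable (s : ℕ) {t : ℕ} (ns : Fin t → ℕ)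

theorem adj_inl {a : Fin s} {v : Fin s ⊕ (Σ i : Fin t, Fin (ns i))} :
    (joinCliques s ns).Adj (Sum.inl a) v ↔ Sum.inl a ≠ v :=
  ⟨And.left, fun h => ⟨h, Or.inl ⟨a, rfl⟩⟩⟩

theorem adj_inr_inl {p : Σ i : Fin t, Fin (ns i)} {a : Fin s} :
    (joinCliques s ns).Adj (Sum.inr p) (Sum.inl a) :=
  ⟨Sum.inr_ne_inl, Or.inr (Or.inl ⟨a, rfl⟩)⟩

theorem adj_inr_inr {p q : Σ i : Fin t, Fin (ns i)} :
    (joinCliques s ns).Adj (Sum.inr p) (Sum.inr q) ↔ p ≠ q ∧ p.1 = q.1 := by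
  simp only [joinCliques, ne_eq, Sum.inr.injEq, reduceCtorEq, exists_false, false_or]
  constructor
  · rintro ⟨hne, i, x, y, rfl, rfl⟩
    exact ⟨hne, rfl⟩
  · obtain ⟨i, x⟩ := p
    obtain ⟨j, y⟩ := q
    rintro ⟨hne, rfl : i = j⟩
    exact ⟨hne, i, x, y, rfl, rfl⟩

theorem neighborFinset_inl (a : Fin s) :
    (joinCliques s ns).neighborFinset (Sum.inl a) = univ.erase (Sum.inl a) := by
  ext v
  simp [adj_inl, eq_comm]

theorem neighborFinset_inr (i : Fin t) (x : Fin (ns i)) :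
    (joinCliques s ns).neighborFinset (Sum.inr ⟨i, x⟩) =
      univ.disjSum ((univ.erase x).map ⟨Sigma.mk i, sigma_mk_injective⟩) := by
  ext (a | ⟨j, y⟩)
  · simp [adj_inr_inl]
  · simp only [SimpleGraph.mem_neighborFinset, adj_inr_inr, inr_mem_disjSum, mem_map,
      mem_erase, mem_univ, and_true, Function.Embedding.coeFn_mk]
    constructor
    · rintro ⟨hne, rfl : i = j⟩
      exact ⟨y, fun h => hne (h ▸ rfl), rfl⟩
    · rintro ⟨z, hz, h⟩
      cases h
      exact ⟨fun h => hz (eq_of_heq (Sigma.mk.inj h).2).symm, rfl⟩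

theorem degree_inl (a : Fin s) : (joinCliques s ns).degree (Sum.inl a) = s + ∑ i, ns i - 1 := by
  simp [SimpleGraph.degree, neighborFinset_inl]

theorem degree_inr (i : Fin t) (x : Fin (ns i)) :
    (joinCliques s ns).degree (Sum.inr ⟨i, x⟩) = s + (ns i - 1) := by
  simp [SimpleGraph.degree, neighborFinset_inr]

theorem two_mul_ncard_edgeSet :
    2 * (joinCliques s ns).edgeSet.ncard =
      s * (s + ∑ i, ns i - 1) + ∑ i, ns i * (s + (ns i - 1)) := by
  rw [← SimpleGraph.coe_edgeFinset, Set.ncard_coe_finset,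
    ← SimpleGraph.sum_degrees_eq_twice_card_edges, Fintype.sum_sum_type, Fintype.sum_sigma]
  simp [degree_inl, degree_inr]

end joinCliques

theorem sq_lt_sq_sub_add_of_le {x w n : ℝ} (hx : 0 ≤ x) (hxw : x ≤ w) (hwn : w ≤ n)
    (hxn : x < n) : x ^ 2 < w ^ 2 - w + n := by
  rcases hwn.lt_or_eq with hwn | rfl
  · nlinarith
  · nlinarith

-- `ω = ⌈(n + 2)/(b + 1)⌉` appears as the floor quotient `(n + b + 2)/(b + 1)`.
/-- For `b ≥ 1`, `n ≥ b + 2` and `ω = ⌈(n+2)/(b+1)⌉ = (n + b + 2)/(b + 1)`: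
`2e(K_{n−ω} ∨ ωK₁) = (n − ω)(n + ω − 1) < ((b² + 2b)n² − 4n − 4)/(b+1)²`. -/
theorem statement11 (b n : ℕ) (hb : 1 ≤ b) (hn : b + 2 ≤ n) :
    2 * (joinCliques (n - (n + b + 2) / (b + 1))
          (fun _ : Fin ((n + b + 2) / (b + 1)) => 1)).edgeSet.ncard
        = (n - (n + b + 2) / (b + 1)) * (n + (n + b + 2) / (b + 1) - 1) ∧
      (((n - (n + b + 2) / (b + 1)) * (n + (n + b + 2) / (b + 1) - 1) : ℕ) : ℝ)
        < (((b : ℝ) ^ 2 + 2 * b) * (n : ℝ) ^ 2 - 4 * n - 4) / ((b : ℝ) + 1) ^ 2 := by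
  have hω_le : (n + b + 2) / (b + 1) ≤ n := Nat.div_le_of_le_mul (by nlinarith)
  have hω_ge : n + 2 ≤ (n + b + 2) / (b + 1) * (b + 1) := by
    have := Nat.lt_div_mul_add (a := n + b + 2) (b := b + 1) (by omega)
    omega
  generalize (n + b + 2) / (b + 1) = ω at *
  refine ⟨?_, ?_⟩
  · rw [joinCliques.two_mul_ncard_edgeSet]
    simp only [sum_const, card_univ, Fintype.card_fin, smul_eq_mul, mul_one, one_mul,
      Nat.sub_self, add_zero, Nat.sub_add_cancel hω_le]
    zify [hω_le, show 1 ≤ n by omega, show 1 ≤ n + ω by omega]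
    ring
  · have hb1 : (0 : ℝ) < b + 1 := by positivity
    have hrhs : (((b : ℝ) ^ 2 + 2 * b) * (n : ℝ) ^ 2 - 4 * n - 4) / ((b : ℝ) + 1) ^ 2 =
        n ^ 2 - ((n + 2) / (b + 1)) ^ 2 := by
      field_simp
      ring
    have key := sq_lt_sq_sub_add_of_le (x := (n + 2) / (b + 1)) (w := ω) (n := n) (by positivity)
      ((div_le_iff₀ hb1).2 (by exact_mod_cast hω_ge)) (by exact_mod_cast hω_le)
      ((div_lt_iff₀ hb1).2 (by norm_cast; nlinarith))
    rw [hrhs, Nat.cast_mul, Nat.cast_sub hω_le, Nat.cast_sub (by omega)]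
    push_cast
    linear_combination key
end

section
/- Let b ≥ 2 and l ≥ 2 be integers, set g = ⌈(l−1)/b⌉, and let n and s be integers with n ≥ 6bg and g + 1 ≤ s ≤ (n−1)/(b+1). Then for every real x ≥ 2n − 2bg − 2, the quadratic φ(x) = (2b−1)x² − (2bn − 3n + 4bs + 4bg − 4b + 4)x − 2n² + 4bsn + 4bgn + 6n − 2b²s² − 2b²sg − 2b²g² − 6bs − 6bg − 4 satisfies φ(x) > 0. -/
/-!
`φ` is an upward parabola (its leading coefficient is `2b − 1 > 0`). At `x₀ = 2n − 2bg − 2`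
its value is `2b` times a quantity that is positive once `n ≥ 6bg` and `n ≥ (b+1)s + 1`, and
its slope there is `(6b − 1)n − 4bs − 8b²g − 4b ≥ 0`; hence `φ > 0` on `[x₀, ∞)`.
-/

open scoped Classical ENNReal

/-- The paper's `φ`, defined by `f_{B₁}(x) − f_{B₂}(x) = (s − g) φ(x)`. -/
def quotientPolyDiff (b n s g x : ℝ) : ℝ :=
  (2 * b - 1) * x ^ 2 - (2 * b * n - 3 * n + 4 * b * s + 4 * b * g - 4 * b + 4) * x
    - 2 * n ^ 2 + 4 * b * s * n + 4 * b * g * n + 6 * n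
    - 2 * b ^ 2 * s ^ 2 - 2 * b ^ 2 * s * g - 2 * b ^ 2 * g ^ 2 - 6 * b * s - 6 * b * g - 4

namespace quotientPolyDiff

variable {b n s g : ℝ}

theorem eq_taylor (x : ℝ) :
    quotientPolyDiff b n s g x = quotientPolyDiff b n s g (2 * n - 2 * b * g - 2)
      + ((6 * b - 1) * n - 4 * b * s - 8 * b ^ 2 * g - 4 * b) * (x - (2 * n - 2 * b * g - 2))
      + (2 * b - 1) * (x - (2 * n - 2 * b * g - 2)) ^ 2 := by
  unfold quotientPolyDiff
  ring

theorem start_eq : quotientPolyDiff b n s g (2 * n - 2 * b * g - 2) = 2 * b *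
    (2 * n ^ 2 - 2 * n - 2 * n * s - g * n - 6 * b * g * n + s + g - b * s ^ 2 + 4 * b * g
      + 3 * b * g * s + b * g ^ 2 + 4 * b ^ 2 * g ^ 2) := by
  unfold quotientPolyDiff
  ring

theorem start_pos (hb : 2 ≤ b) (hg : 0 ≤ g) (hn : 6 * b * g ≤ n) (hs : g + 1 ≤ s)
    (hsn : (b + 1) * s + 1 ≤ n) : 0 < quotientPolyDiff b n s g (2 * n - 2 * b * g - 2) := by
  rw [start_eq]
  refine mul_pos (by linarith) ?_
  have hu : 0 ≤ n - 6 * b * g := by linarith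
  have hv : 0 ≤ n - (b + 1) * s - 1 := by linarith
  have hw : 0 ≤ s - g - 1 := by linarith
  have hb2 : 0 ≤ b - 2 := by linarith
  have hs0 : 0 ≤ s := by linarith
  have hb0 : 0 ≤ b := by linarith
  have hn0 : 0 ≤ n := by nlinarith
  nlinarith [mul_nonneg hb0 hg, mul_nonneg (mul_nonneg hb0 hg) hs0, mul_nonneg hu hn0,
    mul_nonneg hv hn0, mul_nonneg hb2 (mul_nonneg hs0 hs0), mul_nonneg hv hw]

theorem slope_nonneg (hb : 2 ≤ b) (hg : 0 ≤ g) (hn : 6 * b * g ≤ n) (hs : g + 1 ≤ s)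
    (hsn : (b + 1) * s + 1 ≤ n) : 0 ≤ (6 * b - 1) * n - 4 * b * s - 8 * b ^ 2 * g - 4 * b := by
  nlinarith

theorem pos (hb : 2 ≤ b) (hg : 0 ≤ g) (hn : 6 * b * g ≤ n) (hs : g + 1 ≤ s)
    (hsn : (b + 1) * s + 1 ≤ n) {x : ℝ} (hx : 2 * n - 2 * b * g - 2 ≤ x) :
    0 < quotientPolyDiff b n s g x := by
  rw [eq_taylor]
  have hslope := mul_nonneg (slope_nonneg hb hg hn hs hsn) (sub_nonneg.2 hx)
  have hsq := mul_nonneg (by linarith : (0 : ℝ) ≤ 2 * b - 1)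
    (sq_nonneg (x - (2 * n - 2 * b * g - 2)))
  linarith [start_pos hb hg hn hs hsn]

end quotientPolyDiff

theorem statement14_general (b n s g : ℕ) (hb : 2 ≤ b)
    (hn : 6 * b * g ≤ n) (hs1 : g + 1 ≤ s) (hs2 : (b + 1) * s ≤ n - 1) :
    ∀ x : ℝ, 2 * (n : ℝ) - 2 * b * g - 2 ≤ x →
      0 < (2 * (b : ℝ) - 1) * x ^ 2
          - (2 * (b : ℝ) * n - 3 * n + 4 * b * s + 4 * b * g - 4 * b + 4) * x
          - 2 * (n : ℝ) ^ 2 + 4 * b * s * n + 4 * b * g * n + 6 * n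
          - 2 * (b : ℝ) ^ 2 * s ^ 2 - 2 * (b : ℝ) ^ 2 * s * g - 2 * (b : ℝ) ^ 2 * g ^ 2
          - 6 * b * s - 6 * b * g - 4 := by
  intro x hx
  have hsn : (b + 1) * s + 1 ≤ n := by
    have : 0 < (b + 1) * s := Nat.mul_pos b.succ_pos (by omega)
    omega
  exact quotientPolyDiff.pos (by exact_mod_cast hb) g.cast_nonneg (by exact_mod_cast hn)
    (by exact_mod_cast hs1) (by exact_mod_cast hsn) hx

/-- For `b ≥ 2`, `l ≥ 2`, `g = ⌈(l−1)/b⌉ = (l + b − 2)/b`, `n ≥ 6bg` and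
`g + 1 ≤ s ≤ (n−1)/(b+1)`: for every real `x ≥ 2n − 2bg − 2`, the quadratic
`φ(x) = (2b−1)x² − (2bn − 3n + 4bs + 4bg − 4b + 4)x − 2n² + 4bsn + 4bgn + 6n
− 2b²s² − 2b²sg − 2b²g² − 6bs − 6bg − 4` is positive. -/
theorem statement14 (b l n s g : ℕ) (hb : 2 ≤ b) (hl : 2 ≤ l)
    (hg : g = (l + b - 2) / b)
    (hn : 6 * b * g ≤ n) (hs1 : g + 1 ≤ s) (hs2 : (b + 1) * s ≤ n - 1) :
    ∀ x : ℝ, 2 * (n : ℝ) - 2 * b * g - 2 ≤ x →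
      0 < (2 * (b : ℝ) - 1) * x ^ 2
          - (2 * (b : ℝ) * n - 3 * n + 4 * b * s + 4 * b * g - 4 * b + 4) * x
          - 2 * (n : ℝ) ^ 2 + 4 * b * s * n + 4 * b * g * n + 6 * n
          - 2 * (b : ℝ) ^ 2 * s ^ 2 - 2 * (b : ℝ) ^ 2 * s * g - 2 * (b : ℝ) ^ 2 * g ^ 2
          - 6 * b * s - 6 * b * g - 4 :=
  statement14_general b n s g hb hn hs1 hs2
end
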